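/- arXiv:1103.2709 — 4 statements merged into one kernel-verified Lean document; each statement's English description precedes it below -/
import Mathlib

section
/- Totality of End of the line: Let V be a finite set, S, P : V → V functions, and v₀ ∈ V such that P(v₀) = v₀, S(v₀) ≠ v₀, and P(S(v₀)) = v₀. Then there exists x ∈ V with x ≠ v₀ such that P(S(x)) ≠ x or S(P(x)) ≠ x. -/
/-- **Totality of End of the line.** If `S, P : V → V` on a finite set `V` and
`v₀` satisfies `P v₀ = v₀`, `S v₀ ≠ v₀` and `P (S v₀) = v₀` (so `v₀` is the start
of a line: it has an outgoing arc and no incoming arc), then there exists another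
vertex `x ≠ v₀` missing an outgoing arc or missing an incoming arc. -/
theorem end_of_the_line_total {V : Type*} [Fintype V] (S P : V → V) (v₀ : V)
    (h₁ : P v₀ = v₀) (h₂ : S v₀ ≠ v₀) (h₃ : P (S v₀) = v₀) :
    ∃ x : V, x ≠ v₀ ∧ (P (S x) ≠ x ∨ S (P x) ≠ x) := by
  by_contra! h
  have hPS : Function.LeftInverse P S := fun x => by
    rcases eq_or_ne x v₀ with rfl | hx
    · exact h₃
    · exact (h x hx).1
  -- Finiteness upgrades `P ∘ S = id` to `S ∘ P = id`, which fails at `v₀` since `P v₀ = v₀`.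
  have hSP : Function.RightInverse P S := hPS.rightInverse_of_card_le le_rfl
  exact h₂ (by simpa only [h₁] using hSP v₀)
end

section
/- Let (A,B) be an n×n bimatrix game all of whose payoff entries are strictly positive, and let G' be the 2n×2n symmetrized bimatrix game whose row-player payoff matrix is R = [[0, A],[Bᵀ, 0]] and whose column-player payoff matrix is C = Rᵀ = [[0, B],[Aᵀ, 0]] (in block form, with 0 denoting the n×n zero matrix). Let (X, Y) ∈ Δ^{2n} × Δ^{2n} be a Nash equilibrium of G', and set p = Σ_{i=1}^n X_i and q = Σ_{i=1}^n Y_i. If p > 0 and q < 1, then the probability vectors x = (X_1/p, …, X_n/p) and y = (Y_{n+1}/(1−q), …, Y_{2n}/(1−q)) form a Nash equilibrium of (A,B). -/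
/-!
In an equilibrium `(X, Y)` of the symmetrized game `(R, Rᵀ)` each of `X`, `Y` is a best reply to
the other against `R`, i.e. no pure strategy earns more than it does. Then the part of a best reply
carried by any block of pure strategies earns at least its mass times the equilibrium payoff, so
once normalised it is a best reply against the payoffs of that block. Against `Y` the first `n` rows
of `R` pay `A` applied to the last `n` coordinates of `Y`, and against `X` the last `n` rows pay
`Bᵀ` applied to the first `n` coordinates of `X`; rescaling the opponent's strategy by a positive
factor does not change best replies.
-/

open Matrix

def IsProbVec {ι : Type*} [Fintype ι] (x : ι → ℝ) : Prop :=
  (∀ i, 0 ≤ x i) ∧ ∑ i, x i = 1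

def IsNashEq {ι κ : Type*} [Fintype ι] [Fintype κ]
    (A B : Matrix ι κ ℝ) (x : ι → ℝ) (y : κ → ℝ) : Prop :=
  IsProbVec x ∧ IsProbVec y ∧
    (∀ x' : ι → ℝ, IsProbVec x' →
      dotProduct x' (A.mulVec y) ≤ dotProduct x (A.mulVec y)) ∧
    (∀ y' : κ → ℝ, IsProbVec y' →
      dotProduct x (B.mulVec y') ≤ dotProduct x (B.mulVec y))

section BestReply

variable {ι κ : Type*} [Fintype ι] [Fintype κ]

theorem IsProbVec.dotProduct_le {x f : ι → ℝ} {v : ℝ} (hx : IsProbVec x) (hf : ∀ i, f i ≤ v) :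
    x ⬝ᵥ f ≤ v :=
  calc x ⬝ᵥ f ≤ ∑ i, x i * v :=
        Finset.sum_le_sum fun i _ => mul_le_mul_of_nonneg_left (hf i) (hx.1 i)
    _ = v := by rw [← Finset.sum_mul, hx.2, one_mul]

theorem isProbVec_single [DecidableEq ι] (k : ι) : IsProbVec (Pi.single k (1 : ℝ)) :=
  ⟨fun i => by by_cases h : i = k <;> simp [h], by simp⟩

theorem isProbVec_inv_sum_smul {z : ι → ℝ} (hz : ∀ i, 0 ≤ z i) (hsum : 0 < ∑ i, z i) :
    IsProbVec ((∑ i, z i)⁻¹ • z) :=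
  ⟨fun i => mul_nonneg (inv_nonneg.2 hsum.le) (hz i), by
    simp only [Pi.smul_apply, smul_eq_mul, ← Finset.mul_sum, inv_mul_cancel₀ hsum.ne']⟩

theorem forall_isProbVec_dotProduct_le_iff {f : ι → ℝ} {v : ℝ} :
    (∀ x, IsProbVec x → x ⬝ᵥ f ≤ v) ↔ ∀ i, f i ≤ v := by
  classical
  refine ⟨fun h i => ?_, fun h x hx => hx.dotProduct_le h⟩
  simpa [single_dotProduct] using h _ (isProbVec_single i)

theorem isNashEq_iff {A B : Matrix ι κ ℝ} {x : ι → ℝ} {y : κ → ℝ} :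
    IsNashEq A B x y ↔ IsProbVec x ∧ IsProbVec y ∧
      (∀ i, (A *ᵥ y) i ≤ x ⬝ᵥ A *ᵥ y) ∧ ∀ j, (Bᵀ *ᵥ x) j ≤ y ⬝ᵥ Bᵀ *ᵥ x := by
  have hB : ∀ y', x ⬝ᵥ B *ᵥ y' = y' ⬝ᵥ Bᵀ *ᵥ x := fun y' => by
    rw [dotProduct_mulVec, mulVec_transpose, dotProduct_comm]
  simp only [IsNashEq, hB, forall_isProbVec_dotProduct_le_iff]

theorem forall_le_dotProduct_mulVec_smul {M : Matrix ι κ ℝ} {x : ι → ℝ} {y : κ → ℝ} {c : ℝ}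
    (hc : 0 ≤ c) (h : ∀ i, (M *ᵥ y) i ≤ x ⬝ᵥ M *ᵥ y) (i : ι) :
    (M *ᵥ (c • y)) i ≤ x ⬝ᵥ M *ᵥ (c • y) := by
  simpa only [mulVec_smul, dotProduct_smul, Pi.smul_apply, smul_eq_mul]
    using mul_le_mul_of_nonneg_left (h i) hc

theorem IsProbVec.sum_mul_dotProduct_le {x f : ι → ℝ} (hx : IsProbVec x)
    (hf : ∀ i, f i ≤ x ⬝ᵥ f) (s : Finset ι) :
    (∑ i ∈ s, x i) * (x ⬝ᵥ f) ≤ ∑ i ∈ s, x i * f i := by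
  classical
  have hcompl : ∑ i ∈ sᶜ, x i * f i ≤ (∑ i ∈ sᶜ, x i) * (x ⬝ᵥ f) := by
    rw [Finset.sum_mul]
    exact Finset.sum_le_sum fun i _ => mul_le_mul_of_nonneg_left (hf i) (hx.1 i)
  have hmass := Finset.sum_add_sum_compl s x
  have hpayoff := Finset.sum_add_sum_compl s fun i => x i * f i
  rw [hx.2] at hmass
  rw [← dotProduct] at hpayoff
  linear_combination (x ⬝ᵥ f) * hmass - hpayoff + hcompl

theorem IsProbVec.le_inv_sum_smul_dotProduct_comp {x f : ι → ℝ} (hx : IsProbVec x)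
    (hf : ∀ i, f i ≤ x ⬝ᵥ f) (e : κ ↪ ι) (hmass : 0 < ∑ j, x (e j)) (j : κ) :
    f (e j) ≤ ((∑ j, x (e j))⁻¹ • (x ∘ e)) ⬝ᵥ (f ∘ e) := by
  have h := hx.sum_mul_dotProduct_le hf (Finset.univ.map e)
  simp only [Finset.sum_map] at h
  rw [smul_dotProduct, smul_eq_mul, le_inv_mul_iff₀ hmass]
  exact (mul_le_mul_of_nonneg_left (hf (e j)) hmass.le).trans h

end BestReply

theorem symmetrization_recovers_nash_general (n : ℕ)
    (A B : Matrix (Fin n) (Fin n) ℝ)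
    (X Y : Fin n ⊕ Fin n → ℝ)
    (hXY : IsNashEq (Matrix.fromBlocks 0 A Bᵀ 0) (Matrix.fromBlocks 0 A Bᵀ 0)ᵀ X Y)
    (p q : ℝ)
    (hp : p = ∑ i : Fin n, X (Sum.inl i))
    (hq : q = ∑ i : Fin n, Y (Sum.inl i))
    (hppos : 0 < p) (hqlt : q < 1) :
    IsNashEq A B (fun i => X (Sum.inl i) / p) (fun j => Y (Sum.inr j) / (1 - q)) := by
  subst hp
  rw [isNashEq_iff, transpose_transpose] at hXY
  obtain ⟨hX, hY, hXbest, hYbest⟩ := hXY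
  have hYr : 1 - q = ∑ j, Y (Sum.inr j) := by
    rw [hq, ← hY.2, Fintype.sum_sum_type]; ring
  have hqpos : 0 < ∑ j, Y (Sum.inr j) := hYr ▸ sub_pos.2 hqlt
  have hx : (fun i => X (Sum.inl i) / ∑ i, X (Sum.inl i)) =
      (∑ i, X (Sum.inl i))⁻¹ • (X ∘ Sum.inl) := by
    ext; simp [div_eq_inv_mul]
  have hy : (fun j => Y (Sum.inr j) / (1 - q)) = (1 - q)⁻¹ • (Y ∘ Sum.inr) := by
    ext; simp [div_eq_inv_mul]
  have hRY : (fromBlocks 0 A Bᵀ 0 *ᵥ Y) ∘ Sum.inl = A *ᵥ (Y ∘ Sum.inr) := by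
    ext; simp [fromBlocks_mulVec]
  have hRX : (fromBlocks 0 A Bᵀ 0 *ᵥ X) ∘ Sum.inr = Bᵀ *ᵥ (X ∘ Sum.inl) := by
    ext; simp [fromBlocks_mulVec]
  rw [isNashEq_iff, hx, hy, hYr]
  refine ⟨isProbVec_inv_sum_smul (fun i => hX.1 _) hppos,
    isProbVec_inv_sum_smul (fun j => hY.1 _) hqpos, fun i => ?_, fun j => ?_⟩
  · refine forall_le_dotProduct_mulVec_smul (by positivity) (fun i => ?_) i
    rw [← hRY]
    exact hX.le_inv_sum_smul_dotProduct_comp hXbest .inl hppos i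
  · refine forall_le_dotProduct_mulVec_smul (by positivity) (fun j => ?_) j
    rw [← hRX]
    exact hY.le_inv_sum_smul_dotProduct_comp hYbest .inr hqpos j

/-- Recovering a Nash equilibrium of `(A, B)` from a Nash equilibrium of the
symmetrized game `G' = (R, Rᵀ)` with `R = [[0, A], [Bᵀ, 0]]`: if, in a Nash
equilibrium `(X, Y)` of `G'`, the row player puts total probability `p > 0` on the
first `n` strategies and the column player puts total probability `q < 1` on them,
then the normalised vectors `x_i = X_i / p` and `y_j = Y_{n+j} / (1 - q)` form a
Nash equilibrium of `(A, B)`. -/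
theorem symmetrization_recovers_nash (n : ℕ)
    (A B : Matrix (Fin n) (Fin n) ℝ)
    (hA : ∀ i j, 0 < A i j) (hB : ∀ i j, 0 < B i j)
    (X Y : Fin n ⊕ Fin n → ℝ)
    (hXY : IsNashEq (Matrix.fromBlocks 0 A Bᵀ 0) (Matrix.fromBlocks 0 A Bᵀ 0)ᵀ X Y)
    (p q : ℝ)
    (hp : p = ∑ i : Fin n, X (Sum.inl i))
    (hq : q = ∑ i : Fin n, Y (Sum.inl i))
    (hppos : 0 < p) (hqlt : q < 1) :
    IsNashEq A B (fun i => X (Sum.inl i) / p) (fun j => Y (Sum.inr j) / (1 - q)) :=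
  symmetrization_recovers_nash_general n A B X Y hXY p q hp hq hppos hqlt
end

section
/- Let (A,B) be an n×n bimatrix game all of whose payoff entries are strictly positive, and let G' be the 2n×2n symmetrized bimatrix game whose row-player payoff matrix is R = [[0, A],[Bᵀ, 0]] and whose column-player payoff matrix is C = Rᵀ (in block form). Then in every Nash equilibrium (X, Y) of G', writing p = Σ_{i=1}^n X_i and q = Σ_{i=1}^n Y_i, it is not the case that p = 1 and q = 1, and it is not the case that p = 0 and q = 0; consequently either (p > 0 and q < 1) or (p < 1 and q > 0). -/
open Matrix

/-! If both players of the symmetrized game put all their mass on the same block of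
strategies, the row player's payoff is `0`, because `R = [[0, A], [Bᵀ, 0]]` vanishes on the
diagonal blocks. A pure strategy from the other block, however, pays the row player a convex
combination of entries of `A` or of `B`, which is strictly positive: so the row player is not
best-responding. -/

namespace IsProbVec

variable {ι κ : Type*} [Fintype ι] [Fintype κ]

theorem nonempty {x : ι → ℝ} (hx : IsProbVec x) : Nonempty ι := by
  by_contra h
  rw [not_nonempty_iff] at h
  simpa using hx.2

theorem single [DecidableEq ι] (i : ι) : IsProbVec (Pi.single i 1 : ι → ℝ) :=
  ⟨fun j => by by_cases h : j = i <;> simp [h], by simp⟩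

theorem dotProduct_pos {x v : ι → ℝ} (hx : IsProbVec x) (hv : ∀ i, 0 < v i) :
    0 < v ⬝ᵥ x := by
  obtain ⟨i, hi⟩ : ∃ i, 0 < x i := by
    by_contra! h
    linarith [hx.2, Finset.sum_nonpos fun i (_ : i ∈ Finset.univ) => h i]
  exact Finset.sum_pos' (fun j _ => mul_nonneg (hv j).le (hx.1 j))
    ⟨i, Finset.mem_univ i, mul_pos (hv i) hi⟩

variable {x : ι ⊕ κ → ℝ}

theorem sum_inl_add_sum_inr (hx : IsProbVec x) :
    ∑ i, x (Sum.inl i) + ∑ j, x (Sum.inr j) = 1 := by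
  rw [← Fintype.sum_sum_type, hx.2]

theorem sum_inl_mem_Icc (hx : IsProbVec x) : ∑ i, x (Sum.inl i) ∈ Set.Icc 0 1 :=
  ⟨Finset.sum_nonneg fun i _ => hx.1 _, by
    linarith [hx.sum_inl_add_sum_inr,
      Finset.sum_nonneg fun j (_ : j ∈ Finset.univ) => hx.1 (Sum.inr j)]⟩

theorem comp_inl_eq_zero_of_sum_inl_eq_zero (hx : IsProbVec x)
    (h : ∑ i, x (Sum.inl i) = 0) : x ∘ Sum.inl = 0 := by
  funext i
  exact (Finset.sum_eq_zero_iff_of_nonneg fun i _ => hx.1 _).mp h i (Finset.mem_univ i)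

theorem comp_inr_eq_zero_of_sum_inl_eq_one (hx : IsProbVec x)
    (h : ∑ i, x (Sum.inl i) = 1) : x ∘ Sum.inr = 0 := by
  have hsum : ∑ j, x (Sum.inr j) = 0 := by linarith [hx.sum_inl_add_sum_inr]
  funext j
  exact (Finset.sum_eq_zero_iff_of_nonneg fun j _ => hx.1 _).mp hsum j (Finset.mem_univ j)

theorem comp_inl_of_sum_inl_eq_one (hx : IsProbVec x) (h : ∑ i, x (Sum.inl i) = 1) :
    IsProbVec (x ∘ Sum.inl) :=
  ⟨fun _ => hx.1 _, h⟩

theorem comp_inr_of_sum_inl_eq_zero (hx : IsProbVec x) (h : ∑ i, x (Sum.inl i) = 0) :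
    IsProbVec (x ∘ Sum.inr) :=
  ⟨fun _ => hx.1 _, by simpa [h] using hx.sum_inl_add_sum_inr⟩

end IsProbVec

theorem IsNashEq.mulVec_apply_le {ι κ : Type*} [Fintype ι] [Fintype κ] [DecidableEq ι]
    {A B : Matrix ι κ ℝ} {x : ι → ℝ} {y : κ → ℝ} (h : IsNashEq A B x y) (i : ι) :
    (A *ᵥ y) i ≤ x ⬝ᵥ A *ᵥ y := by
  simpa [single_dotProduct] using h.2.2.1 _ (IsProbVec.single i)

section Symmetrization

variable {ι κ : Type*} [Fintype ι] [Fintype κ]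

theorem dotProduct_fromBlocks_zero_mulVec (A : Matrix ι κ ℝ) (C : Matrix κ ι ℝ)
    (x y : ι ⊕ κ → ℝ) :
    x ⬝ᵥ fromBlocks 0 A C 0 *ᵥ y =
      (x ∘ Sum.inl) ⬝ᵥ A *ᵥ (y ∘ Sum.inr) + (x ∘ Sum.inr) ⬝ᵥ C *ᵥ (y ∘ Sum.inl) := by
  rw [fromBlocks_mulVec, ← Sum.elim_comp_inl_inr x, sumElim_dotProduct_sumElim]
  simp

variable {A : Matrix ι κ ℝ} {C : Matrix κ ι ℝ} {M : Matrix (ι ⊕ κ) (ι ⊕ κ) ℝ}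
  {x y : ι ⊕ κ → ℝ}

theorem not_isNashEq_fromBlocks_of_sum_inl_eq_one [Nonempty κ] (hC : ∀ j i, 0 < C j i)
    (hx : ∑ i, x (Sum.inl i) = 1) (hy : ∑ i, y (Sum.inl i) = 1) :
    ¬IsNashEq (fromBlocks 0 A C 0) M x y := by
  classical
  intro h
  have hvalue : x ⬝ᵥ fromBlocks 0 A C 0 *ᵥ y = 0 := by
    simp [dotProduct_fromBlocks_zero_mulVec, h.1.comp_inr_eq_zero_of_sum_inl_eq_one hx,
      h.2.1.comp_inr_eq_zero_of_sum_inl_eq_one hy]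
  obtain ⟨j⟩ := ‹Nonempty κ›
  have hdev := h.mulVec_apply_le (Sum.inr j)
  rw [hvalue, fromBlocks_mulVec, Sum.elim_inr, zero_mulVec, add_zero] at hdev
  exact (h.2.1.comp_inl_of_sum_inl_eq_one hy |>.dotProduct_pos (hC j)).not_ge hdev

theorem not_isNashEq_fromBlocks_of_sum_inl_eq_zero [Nonempty ι] (hA : ∀ i j, 0 < A i j)
    (hx : ∑ i, x (Sum.inl i) = 0) (hy : ∑ i, y (Sum.inl i) = 0) :
    ¬IsNashEq (fromBlocks 0 A C 0) M x y := by
  classical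
  intro h
  have hvalue : x ⬝ᵥ fromBlocks 0 A C 0 *ᵥ y = 0 := by
    simp [dotProduct_fromBlocks_zero_mulVec, h.1.comp_inl_eq_zero_of_sum_inl_eq_zero hx,
      h.2.1.comp_inl_eq_zero_of_sum_inl_eq_zero hy]
  obtain ⟨i⟩ := ‹Nonempty ι›
  have hdev := h.mulVec_apply_le (Sum.inl i)
  rw [hvalue, fromBlocks_mulVec, Sum.elim_inl, zero_mulVec, zero_add] at hdev
  exact (h.2.1.comp_inr_of_sum_inl_eq_zero hy |>.dotProduct_pos (hA i)).not_ge hdev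

end Symmetrization

/-- In every Nash equilibrium `(X, Y)` of the symmetrized game `G' = (R, Rᵀ)`,
`R = [[0, A], [Bᵀ, 0]]`, built from a bimatrix game `(A, B)` with strictly positive
payoffs, writing `p` and `q` for the total probabilities the two players put on their
first `n` strategies: it is not the case that `p = 1 = q`, it is not the case that
`p = 0 = q`, and consequently either (`p > 0` and `q < 1`) or (`p < 1` and `q > 0`). -/
theorem symmetrization_equilibrium_not_degenerate (n : ℕ)
    (A B : Matrix (Fin n) (Fin n) ℝ)
    (hA : ∀ i j, 0 < A i j) (hB : ∀ i j, 0 < B i j)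
    (X Y : Fin n ⊕ Fin n → ℝ)
    (hXY : IsNashEq (Matrix.fromBlocks 0 A Bᵀ 0) (Matrix.fromBlocks 0 A Bᵀ 0)ᵀ X Y)
    (p q : ℝ)
    (hp : p = ∑ i : Fin n, X (Sum.inl i))
    (hq : q = ∑ i : Fin n, Y (Sum.inl i)) :
    ¬(p = 1 ∧ q = 1) ∧ ¬(p = 0 ∧ q = 0) ∧
      ((0 < p ∧ q < 1) ∨ (p < 1 ∧ 0 < q)) := by
  subst hp hq
  have : Nonempty (Fin n) := by simpa using hXY.1.nonempty
  have not_one : ¬(∑ i, X (Sum.inl i) = 1 ∧ ∑ i, Y (Sum.inl i) = 1) := fun ⟨hX, hY⟩ =>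
    not_isNashEq_fromBlocks_of_sum_inl_eq_one (fun j i => hB i j) hX hY hXY
  have not_zero : ¬(∑ i, X (Sum.inl i) = 0 ∧ ∑ i, Y (Sum.inl i) = 0) := fun ⟨hX, hY⟩ =>
    not_isNashEq_fromBlocks_of_sum_inl_eq_zero hA hX hY hXY
  have hp := hXY.1.sum_inl_mem_Icc
  have hq := hXY.2.1.sum_inl_mem_Icc
  refine ⟨not_one, not_zero, ?_⟩
  grind
end

section
/- Every finite k-player game (k ≥ 2) with all payoffs in [0,1] has a (1 − 1/k)-approximate Nash equilibrium in which every player's mixed strategy is supported on at most 2 pure strategies. -/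
/-- A mixed strategy: a probability distribution on a finite set of pure strategies. -/
def IsMixed {σ : Type*} [Fintype σ] (x : σ → ℝ) : Prop :=
  (∀ a, 0 ≤ x a) ∧ ∑ a, x a = 1

/-- A mixed-strategy profile: one mixed strategy per player. -/
def IsProfile {k : ℕ} {S : Fin k → Type*} [∀ i, Fintype (S i)]
    (x : ∀ i, S i → ℝ) : Prop := ∀ i, IsMixed (x i)

/-- Player's expected payoff under a mixed-strategy profile. -/
noncomputable def expectedPayoff {k : ℕ} {S : Fin k → Type*} [∀ i, Fintype (S i)]
    (u : (∀ i, S i) → ℝ) (x : ∀ i, S i → ℝ) : ℝ :=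
  ∑ s : ∀ i, S i, u s * ∏ i, x i (s i)

/-- `ε`-approximate Nash equilibrium: no player can improve his expected payoff by
more than `ε` via a unilateral deviation to any mixed strategy. -/
def IsEpsApproxNash {k : ℕ} {S : Fin k → Type*} [∀ i, Fintype (S i)]
    (u : ∀ i : Fin k, (∀ i, S i) → ℝ) (ε : ℝ) (x : ∀ i, S i → ℝ) : Prop :=
  ∀ (i : Fin k) (y : S i → ℝ), IsMixed y →
    expectedPayoff (u i) (Function.update x i y) - ε ≤ expectedPayoff (u i) x

/-! Fix a pure profile `t`. Going through the players in order, player `i` plays `t i` with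
probability `i/(i+1)` and, with probability `1/(i+1)`, a pure best response `b` to the profile in
which the players before `i` already play their final strategies and those after `i` still play
`t`. Seen from player `i`, the final profile differs from the one `b` answered only in the players
`j > i`, each of whom still plays `t j` with probability at least `j/(j+1)`; these factors
telescope to `(i+1)/k`. So if `V ≤ 1` is the value of `b`, a deviation earns at most
`(i+1)/k * V + 1 - (i+1)/k`, while staying earns at least `V/k` because `b` is played with
probability `1/(i+1)`; the difference is at most `1 - 1/k`. -/

open Finset

section WeightedSums

variable {α : Type*} [Fintype α] {f p q : α → ℝ} {c : ℝ}

theorem mul_sum_le_sum_of_mul_le (hf : ∀ a, 0 ≤ f a) (hpq : ∀ a, c * q a ≤ p a) :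
    c * ∑ a, f a * q a ≤ ∑ a, f a * p a := by
  rw [mul_sum]
  refine sum_le_sum fun a _ => ?_
  calc c * (f a * q a) = f a * (c * q a) := by ring
    _ ≤ f a * p a := mul_le_mul_of_nonneg_left (hpq a) (hf a)

theorem sum_le_mul_sum_add_of_mul_le (hf : ∀ a, f a ≤ 1) (hpq : ∀ a, c * q a ≤ p a)
    (hp : ∑ a, p a = 1) (hq : ∑ a, q a = 1) :
    ∑ a, f a * p a ≤ c * ∑ a, f a * q a + (1 - c) := by
  have key : ∑ a, f a * (p a - c * q a) ≤ ∑ a, (p a - c * q a) := by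
    gcongr with a
    nlinarith [hf a, hpq a]
  simp only [sum_sub_distrib, mul_sub, ← mul_sum, hp, hq] at key
  simp only [mul_left_comm _ c, ← mul_sum] at key
  linarith

theorem prod_mul_prod_le_prod {ι : Type*} [Fintype ι] {c x y : ι → ℝ} (hc : ∀ j, 0 ≤ c j)
    (hy : ∀ j, 0 ≤ y j) (h : ∀ j, c j * y j ≤ x j) : (∏ j, c j) * ∏ j, y j ≤ ∏ j, x j := by
  rw [← prod_mul_distrib]
  exact prod_le_prod (fun j _ => mul_nonneg (hc j) (hy j)) fun j _ => h j

end WeightedSums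

theorem IsMixed.pi_single {σ : Type*} [Fintype σ] [DecidableEq σ] (a : σ) :
    IsMixed (Pi.single a (1 : ℝ)) :=
  ⟨fun c => by by_cases h : c = a <;> simp [h], by simp⟩

theorem prod_range_ite_le_div_succ {n K : ℕ} (h : n < K) :
    ∏ m ∈ range K, (if m ≤ n then (1 : ℝ) else m / (m + 1)) = (n + 1) / K := by
  induction K, h using Nat.le_induction with
  | base =>
    rw [prod_eq_one fun m hm => if_pos (Nat.lt_succ_iff.mp (mem_range.mp hm))]
    push_cast
    field_simp
  | succ K hnK ih =>
    rw [prod_range_succ, ih, if_neg (by omega)]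
    have : (K : ℝ) ≠ 0 := Nat.cast_ne_zero.mpr (by omega)
    push_cast
    field_simp

section Games

variable {k : ℕ}

noncomputable def prefixWeight (i j : Fin k) : ℝ :=
  if j ≤ i then 1 else (j : ℝ) / (j + 1)

theorem prod_prefixWeight (i : Fin k) : ∏ j, prefixWeight i j = (i + 1) / k :=
  (Fin.prod_univ_eq_prod_range (fun m => if m ≤ (i : ℕ) then (1 : ℝ) else m / (m + 1)) k).trans
    (prod_range_ite_le_div_succ i.isLt)

theorem prefixWeight_nonneg (i j : Fin k) : 0 ≤ prefixWeight i j := by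
  unfold prefixWeight
  split_ifs <;> positivity

variable {S : Fin k → Type*} [∀ i, Fintype (S i)]

namespace IsProfile

variable {p : ∀ j, S j → ℝ}

theorem update (hp : IsProfile p) {i : Fin k} {y : S i → ℝ} (hy : IsMixed y) :
    IsProfile (Function.update p i y) := by
  intro j
  rcases eq_or_ne j i with rfl | hj
  · simpa using hy
  · simpa [hj] using hp j

theorem sum_prod_eq_one (hp : IsProfile p) : ∑ s : ∀ j, S j, ∏ j, p j (s j) = 1 := by
  rw [← Fintype.prod_sum]
  exact prod_eq_one fun j _ => (hp j).2

end IsProfile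

theorem expectedPayoff_le_one {u : (∀ j, S j) → ℝ} (hu : ∀ s, u s ≤ 1) {p : ∀ j, S j → ℝ}
    (hp : IsProfile p) : expectedPayoff u p ≤ 1 := by
  calc expectedPayoff u p ≤ ∑ s : ∀ j, S j, 1 * ∏ j, p j (s j) := by
        unfold expectedPayoff
        gcongr with s
        · exact prod_nonneg fun j _ => (hp j).1 (s j)
        · exact hu s
    _ = 1 := by simpa using hp.sum_prod_eq_one

section Payoffs

variable (u : (∀ j, S j) → ℝ)

theorem expectedPayoff_update (p : ∀ j, S j → ℝ) (i : Fin k) (y : S i → ℝ) :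
    expectedPayoff u (Function.update p i y) =
      ∑ s : ∀ j, S j, y (s i) * (u s * ∏ j ∈ univ.erase i, p j (s j)) := by
  refine sum_congr rfl fun s _ => ?_
  rw [← mul_prod_erase univ _ (mem_univ i), Function.update_self,
    prod_congr rfl fun j hj => by rw [Function.update_of_ne (ne_of_mem_erase hj)]]
  ring

variable [∀ i, DecidableEq (S i)]

theorem expectedPayoff_update_eq_sum (p : ∀ j, S j → ℝ) (i : Fin k) (y : S i → ℝ) :
    expectedPayoff u (Function.update p i y) =
      ∑ a, y a * expectedPayoff u (Function.update p i (Pi.single a 1)) := by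
  simp only [expectedPayoff_update, mul_sum]
  rw [sum_comm]
  refine sum_congr rfl fun s _ => ?_
  simp [Pi.single_apply]

variable [∀ i, Nonempty (S i)]

noncomputable def bestResponse (p : ∀ j, S j → ℝ) (i : Fin k) : S i :=
  (Finite.exists_max fun a : S i => expectedPayoff u (Function.update p i (Pi.single a 1))).choose

noncomputable def bestResponseValue (p : ∀ j, S j → ℝ) (i : Fin k) : ℝ :=
  expectedPayoff u (Function.update p i (Pi.single (bestResponse u p i) 1))

theorem expectedPayoff_update_le_bestResponseValue (p : ∀ j, S j → ℝ) (i : Fin k)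
    {y : S i → ℝ} (hy : IsMixed y) :
    expectedPayoff u (Function.update p i y) ≤ bestResponseValue u p i := by
  have hbest := (Finite.exists_max fun a : S i =>
    expectedPayoff u (Function.update p i (Pi.single a 1))).choose_spec
  rw [expectedPayoff_update_eq_sum]
  calc _ ≤ ∑ a, y a * bestResponseValue u p i :=
        sum_le_sum fun a _ => mul_le_mul_of_nonneg_left (hbest a) (hy.1 a)
    _ = _ := by rw [← sum_mul, hy.2, one_mul]

end Payoffs

section Domination

variable {u : (∀ j, S j) → ℝ} {c : Fin k → ℝ} {p q : ∀ j, S j → ℝ}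

theorem mul_expectedPayoff_le_of_mul_le (hu : ∀ s, 0 ≤ u s) (hc : ∀ j, 0 ≤ c j)
    (hq : ∀ j a, 0 ≤ q j a) (hpq : ∀ j a, c j * q j a ≤ p j a) :
    (∏ j, c j) * expectedPayoff u q ≤ expectedPayoff u p :=
  mul_sum_le_sum_of_mul_le hu (fun s =>
    prod_mul_prod_le_prod hc (fun j => hq j (s j)) fun j => hpq j (s j))

theorem expectedPayoff_le_mul_add_of_mul_le (hu : ∀ s, u s ≤ 1) (hp : IsProfile p)
    (hq : IsProfile q) (hc : ∀ j, 0 ≤ c j) (hpq : ∀ j a, c j * q j a ≤ p j a) :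
    expectedPayoff u p ≤ (∏ j, c j) * expectedPayoff u q + (1 - ∏ j, c j) :=
  sum_le_mul_sum_add_of_mul_le hu
    (fun s => prod_mul_prod_le_prod hc (fun j => (hq j).1 (s j)) fun j => hpq j (s j))
    hp.sum_prod_eq_one hq.sum_prod_eq_one

theorem mul_expectedPayoff_update_le (hu : ∀ s, 0 ≤ u s) (hp : ∀ j a, 0 ≤ p j a) {i : Fin k}
    {y : S i → ℝ} {c : ℝ} (hc : 0 ≤ c) (hy : ∀ a, 0 ≤ y a) (hyp : ∀ a, c * y a ≤ p i a) :
    c * expectedPayoff u (Function.update p i y) ≤ expectedPayoff u p := by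
  have hweight : ∀ j, 0 ≤ Function.update (1 : Fin k → ℝ) i c j := by
    intro j
    rcases eq_or_ne j i with rfl | hj <;> simp [*]
  have hprod : ∏ j, Function.update (1 : Fin k → ℝ) i c j = c := by
    simp [prod_update_of_mem (mem_univ i)]
  rw [← hprod]
  refine mul_expectedPayoff_le_of_mul_le hu hweight (fun j a => ?_) fun j a => ?_
  · rcases eq_or_ne j i with rfl | hj
    · simpa using hy a
    · simpa [hj] using hp j a
  · rcases eq_or_ne j i with rfl | hj
    · simpa using hyp a
    · simp [hj]

end Domination

section Construction

variable [∀ i, DecidableEq (S i)] [∀ i, Nonempty (S i)]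
  (u : Fin k → (∀ j, S j) → ℝ) (t : ∀ j, S j)

noncomputable def greedyProfile (i : Fin k) : S i → ℝ :=
  ((i : ℝ) / (i + 1)) • Pi.single (t i) 1 + (1 / ((i : ℝ) + 1)) • Pi.single
    (bestResponse (u i) (fun j => if j < i then greedyProfile j else Pi.single (t j) 1) i) 1
termination_by i

noncomputable def prefixProfile (i : Fin k) : ∀ j, S j → ℝ :=
  fun j => if j < i then greedyProfile u t j else Pi.single (t j) 1

theorem greedyProfile_eq (i : Fin k) :
    greedyProfile u t i = ((i : ℝ) / (i + 1)) • Pi.single (t i) 1 +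
      (1 / ((i : ℝ) + 1)) • Pi.single (bestResponse (u i) (prefixProfile u t i) i) 1 := by
  rw [greedyProfile]
  rfl

theorem greedyProfile_apply (i : Fin k) (a : S i) :
    greedyProfile u t i a = (i : ℝ) / (i + 1) * (Pi.single (t i) 1 : S i → ℝ) a +
      1 / ((i : ℝ) + 1) *
        (Pi.single (bestResponse (u i) (prefixProfile u t i) i) 1 : S i → ℝ) a := by
  rw [greedyProfile_eq]
  rfl

theorem isMixed_greedyProfile (i : Fin k) : IsMixed (greedyProfile u t i) := by
  refine ⟨fun a => ?_, ?_⟩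
  · rw [greedyProfile_apply]
    have := (IsMixed.pi_single (t i)).1 a
    have := (IsMixed.pi_single (bestResponse (u i) (prefixProfile u t i) i)).1 a
    positivity
  · simp only [greedyProfile_apply, sum_add_distrib, ← mul_sum, (IsMixed.pi_single _).2]
    field_simp

theorem isProfile_greedyProfile : IsProfile (greedyProfile u t) :=
  isMixed_greedyProfile u t

theorem isProfile_prefixProfile (i : Fin k) : IsProfile (prefixProfile u t i) := by
  intro j
  unfold prefixProfile
  split_ifs
  exacts [isMixed_greedyProfile u t j, IsMixed.pi_single (t j)]

theorem mul_single_le_greedyProfile (i : Fin k) (a : S i) :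
    (i : ℝ) / (i + 1) * (Pi.single (t i) 1 : S i → ℝ) a ≤ greedyProfile u t i a := by
  rw [greedyProfile_apply]
  have := (IsMixed.pi_single (bestResponse (u i) (prefixProfile u t i) i)).1 a
  simp only [le_add_iff_nonneg_right]
  positivity

theorem mul_single_bestResponse_le_greedyProfile (i : Fin k) (a : S i) :
    1 / ((i : ℝ) + 1) * (Pi.single (bestResponse (u i) (prefixProfile u t i) i) 1 : S i → ℝ) a ≤
      greedyProfile u t i a := by
  rw [greedyProfile_apply]
  have := (IsMixed.pi_single (t i)).1 a
  simp only [le_add_iff_nonneg_left]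
  positivity

theorem greedyProfile_ne_zero (i : Fin k) {a : S i} (ha : greedyProfile u t i a ≠ 0) :
    a = t i ∨ a = bestResponse (u i) (prefixProfile u t i) i := by
  by_contra! h
  simp [greedyProfile_apply, h.1, h.2] at ha

theorem prefixWeight_mul_update_le (i : Fin k) (y : S i → ℝ) (j : Fin k) (a : S j) :
    prefixWeight i j * Function.update (prefixProfile u t i) i y j a ≤
      Function.update (greedyProfile u t) i y j a := by
  rcases lt_trichotomy j i with hji | rfl | hij
  · simp [prefixWeight, prefixProfile, hji.le, hji, hji.ne]
  · simp [prefixWeight]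
  · have := mul_single_le_greedyProfile u t j a
    simpa [prefixWeight, prefixProfile, not_le.mpr hij, not_lt.mpr hij.le, hij.ne'] using this

theorem expectedPayoff_update_greedyProfile_le {i : Fin k} (hu : ∀ s, u i s ≤ 1)
    {y : S i → ℝ} (hy : IsMixed y) :
    expectedPayoff (u i) (Function.update (greedyProfile u t) i y) ≤
      (i + 1) / k * bestResponseValue (u i) (prefixProfile u t i) i + (1 - (i + 1) / k) := by
  calc _ ≤ (i + 1) / k * expectedPayoff (u i) (Function.update (prefixProfile u t i) i y) +
        (1 - (i + 1) / k) := by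
        rw [← prod_prefixWeight i]
        exact expectedPayoff_le_mul_add_of_mul_le hu (isProfile_greedyProfile u t |>.update hy)
          (isProfile_prefixProfile u t i |>.update hy) (prefixWeight_nonneg i)
          (prefixWeight_mul_update_le u t i y)
    _ ≤ _ := by
        gcongr
        exact expectedPayoff_update_le_bestResponseValue _ _ _ hy

theorem bestResponseValue_div_le_expectedPayoff_greedyProfile {i : Fin k} (hu : ∀ s, 0 ≤ u i s) :
    bestResponseValue (u i) (prefixProfile u t i) i / k ≤
      expectedPayoff (u i) (greedyProfile u t) := by
  set b := bestResponse (u i) (prefixProfile u t i) i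
  have hb := IsMixed.pi_single b
  calc _ = 1 / ((i : ℝ) + 1) * ((i + 1) / k * bestResponseValue (u i) (prefixProfile u t i) i) := by
        field_simp
    _ ≤ 1 / ((i : ℝ) + 1) *
        expectedPayoff (u i) (Function.update (greedyProfile u t) i (Pi.single b 1)) := by
        gcongr
        rw [← prod_prefixWeight i]
        exact mul_expectedPayoff_le_of_mul_le hu (prefixWeight_nonneg i)
          (fun j => ((isProfile_prefixProfile u t i).update hb j).1)
          (prefixWeight_mul_update_le u t i _)
    _ ≤ _ := mul_expectedPayoff_update_le hu (fun j => (isProfile_greedyProfile u t j).1)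
        (by positivity) hb.1 (mul_single_bestResponse_le_greedyProfile u t i)

theorem greedyProfile_isEpsApproxNash (hu : ∀ i s, u i s ∈ Set.Icc (0 : ℝ) 1) :
    IsEpsApproxNash u (1 - 1 / (k : ℝ)) (greedyProfile u t) := by
  intro i y hy
  set V := bestResponseValue (u i) (prefixProfile u t i) i
  have hdev := expectedPayoff_update_greedyProfile_le u t (fun s => (hu i s).2) hy
  have hstay := bestResponseValue_div_le_expectedPayoff_greedyProfile u t (fun s => (hu i s).1)
  have hV : V ≤ 1 := expectedPayoff_le_one (fun s => (hu i s).2)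
    ((isProfile_prefixProfile u t i).update (IsMixed.pi_single _))
  have hk : (0 : ℝ) < k := by exact_mod_cast i.pos
  have hκ : 1 / (k : ℝ) ≤ (i + 1) / k := by
    gcongr
    linarith [(i : ℕ).cast_nonneg (α := ℝ)]
  have hgain : (i + 1) / k * V + (1 - (i + 1) / k) - V / k =
      (1 - 1 / k) - ((i + 1) / k - 1 / k) * (1 - V) := by ring
  linarith [mul_nonneg (sub_nonneg.2 hκ) (sub_nonneg.2 hV)]

end Construction

end Games

theorem exists_approx_nash_small_support_general {k : ℕ}
    (S : Fin k → Type*) [∀ i, Fintype (S i)] [∀ i, Nonempty (S i)]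
    (u : ∀ i : Fin k, (∀ i, S i) → ℝ)
    (hu : ∀ i s, u i s ∈ Set.Icc (0 : ℝ) 1) :
    ∃ x : ∀ i, S i → ℝ, IsProfile x ∧
      IsEpsApproxNash u (1 - 1 / (k : ℝ)) x ∧
      ∀ i : Fin k, ∃ a b : S i, ∀ c : S i, x i c ≠ 0 → c = a ∨ c = b := by
  classical
  let t : ∀ j, S j := fun j => Classical.arbitrary (S j)
  exact ⟨greedyProfile u t, isProfile_greedyProfile u t, greedyProfile_isEpsApproxNash u t hu,
    fun i => ⟨_, _, fun _ => greedyProfile_ne_zero u t i⟩⟩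

/-- Every finite `k`-player game (`k ≥ 2`) with payoffs in `[0,1]` has a
`(1 - 1/k)`-approximate Nash equilibrium in which every player's mixed strategy is
supported on at most two pure strategies. -/
theorem exists_approx_nash_small_support {k : ℕ} (hk : 2 ≤ k)
    (S : Fin k → Type*) [∀ i, Fintype (S i)] [∀ i, Nonempty (S i)]
    (u : ∀ i : Fin k, (∀ i, S i) → ℝ)
    (hu : ∀ i s, u i s ∈ Set.Icc (0 : ℝ) 1) :
    ∃ x : ∀ i, S i → ℝ, IsProfile x ∧
      IsEpsApproxNash u (1 - 1 / (k : ℝ)) x ∧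
      ∀ i : Fin k, ∃ a b : S i, ∀ c : S i, x i c ≠ 0 → c = a ∨ c = b :=
  exists_approx_nash_small_support_general S u hu
end
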